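/- arXiv:0712.0338 — 5 statements merged into one kernel-verified Lean document; each statement's English description precedes it below -/
import Mathlib

section
/- The relations D⁺_f, D⁺_p, and D⁺ are all reflexive and transitive (i.e. each is a preorder on M). -/
open Set Topology

/-- The chronological future of `x`: `I⁺(x) = {y | (x,y) ∈ I}`. -/
def chronFuture {M : Type*} (I : Set (M × M)) (x : M) : Set M := {y | (x, y) ∈ I}

/-- The chronological past of `y`: `I⁻(y) = {x | (x,y) ∈ I}`. -/
def chronPast {M : Type*} (I : Set (M × M)) (y : M) : Set M := {x | (x, y) ∈ I}

/-- `D⁺_f = {(x,y) : y ∈ cl(I⁺(x))}`. -/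
def Dfut {M : Type*} [TopologicalSpace M] (I : Set (M × M)) : Set (M × M) :=
  {p | p.2 ∈ closure (chronFuture I p.1)}

/-- `D⁺_p = {(x,y) : x ∈ cl(I⁻(y))}`. -/
def Dpast {M : Type*} [TopologicalSpace M] (I : Set (M × M)) : Set (M × M) :=
  {p | p.1 ∈ closure (chronPast I p.2)}

/-- `D⁺ = D⁺_f ∩ D⁺_p`. -/
def Dplus {M : Type*} [TopologicalSpace M] (I : Set (M × M)) : Set (M × M) :=
  Dfut I ∩ Dpast I

/-! A point `y` in the closure of `I⁺(x)` sees its whole chronological future from `x`: for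
`z ∈ I⁺(y)` the open set `I⁻(z)` is a neighbourhood of `y`, so it meets `I⁺(x)`, and transitivity
of `I` gives `z ∈ I⁺(x)`. Hence `I⁺(y) ⊆ I⁺(x)`, and taking closures gives transitivity of `D⁺_f`.
The past relation `D⁺_p` is `D⁺_f` for the time-reversed relation, and reflexivity is the
hypothesis that every point is a limit of its own future and past. -/

section

variable {M : Type*} [TopologicalSpace M] {I : Set (M × M)}

theorem chronFuture_subset_of_mem_closure (hIopen : IsOpen I)
    (hItrans : ∀ x y z : M, (x, y) ∈ I → (y, z) ∈ I → (x, z) ∈ I) {x y : M}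
    (hy : y ∈ closure (chronFuture I x)) : chronFuture I y ⊆ chronFuture I x := by
  intro z hyz
  have hpast_open : IsOpen (chronPast I z) :=
    hIopen.preimage (continuous_id.prodMk continuous_const)
  obtain ⟨w, hwz, hxw⟩ := mem_closure_iff.mp hy _ hpast_open hyz
  exact hItrans x w z hxw hwz

theorem dfut_trans (hIopen : IsOpen I)
    (hItrans : ∀ x y z : M, (x, y) ∈ I → (y, z) ∈ I → (x, z) ∈ I) {x y z : M}
    (hxy : (x, y) ∈ Dfut I) (hyz : (y, z) ∈ Dfut I) : (x, z) ∈ Dfut I :=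
  closure_mono (chronFuture_subset_of_mem_closure hIopen hItrans hxy) hyz

theorem mem_dpast_iff_mem_dfut_swap {x y : M} :
    (x, y) ∈ Dpast I ↔ (y, x) ∈ Dfut (Prod.swap ⁻¹' I) :=
  Iff.rfl

theorem dpast_trans (hIopen : IsOpen I)
    (hItrans : ∀ x y z : M, (x, y) ∈ I → (y, z) ∈ I → (x, z) ∈ I) {x y z : M}
    (hxy : (x, y) ∈ Dpast I) (hyz : (y, z) ∈ Dpast I) : (x, z) ∈ Dpast I :=
  mem_dpast_iff_mem_dfut_swap.2 <|
    dfut_trans (hIopen.preimage continuous_swap) (fun a b c hab hbc => hItrans c b a hbc hab)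
      hyz hxy

end

/-- `D⁺_f`, `D⁺_p` and `D⁺` are reflexive and transitive. -/
theorem dfut_dpast_dplus_preorder {M : Type*} [TopologicalSpace M] (I : Set (M × M))
    (hIopen : IsOpen I)
    (hItrans : ∀ x y z : M, (x, y) ∈ I → (y, z) ∈ I → (x, z) ∈ I)
    (hselfF : ∀ x : M, x ∈ closure (chronFuture I x))
    (hselfP : ∀ x : M, x ∈ closure (chronPast I x)) :
    (∀ x : M, (x, x) ∈ Dfut I) ∧
    (∀ x y z : M, (x, y) ∈ Dfut I → (y, z) ∈ Dfut I → (x, z) ∈ Dfut I) ∧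
    (∀ x : M, (x, x) ∈ Dpast I) ∧
    (∀ x y z : M, (x, y) ∈ Dpast I → (y, z) ∈ Dpast I → (x, z) ∈ Dpast I) ∧
    (∀ x : M, (x, x) ∈ Dplus I) ∧
    (∀ x y z : M, (x, y) ∈ Dplus I → (y, z) ∈ Dplus I → (x, z) ∈ Dplus I) := by
  refine ⟨hselfF, fun _ _ _ => dfut_trans hIopen hItrans, hselfP,
    fun _ _ _ => dpast_trans hIopen hItrans, fun x => ⟨hselfF x, hselfP x⟩, ?_⟩
  rintro x y z ⟨hfut_xy, hpast_xy⟩ ⟨hfut_yz, hpast_yz⟩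
  exact ⟨dfut_trans hIopen hItrans hfut_xy hfut_yz,
    dpast_trans hIopen hItrans hpast_xy hpast_yz⟩
end

section
/- D⁺_p is the largest relation R ⊆ M × M with the property that (x,y) ∈ I and (y,z) ∈ R imply (x,z) ∈ I; that is, any relation R with this property satisfies R ⊆ D⁺_p, and D⁺_p itself has the property. -/
open Set Topology

theorem isOpen_chronFuture {M : Type*} [TopologicalSpace M] {I : Set (M × M)} (hI : IsOpen I)
    (x : M) : IsOpen (chronFuture I x) :=
  hI.preimage (Continuous.prodMk_right x)

-- The open neighbourhood `I⁺(x)` of `y ∈ cl(I⁻(z))` meets `I⁻(z)`.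
theorem mem_of_mem_of_mem_Dpast {M : Type*} [TopologicalSpace M] {I : Set (M × M)}
    (hI : IsOpen I) (hItrans : ∀ x y z : M, (x, y) ∈ I → (y, z) ∈ I → (x, z) ∈ I)
    {x y z : M} (hxy : (x, y) ∈ I) (hyz : (y, z) ∈ Dpast I) : (x, z) ∈ I := by
  obtain ⟨w, hxw, hwz⟩ := mem_closure_iff.mp hyz _ (isOpen_chronFuture hI x) hxy
  exact hItrans x w z hxw hwz

theorem subset_Dpast_of_comp_subset {M : Type*} [TopologicalSpace M] {I R : Set (M × M)}
    (hselfP : ∀ x : M, x ∈ closure (chronPast I x))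
    (hR : ∀ x y z : M, (x, y) ∈ I → (y, z) ∈ R → (x, z) ∈ I) : R ⊆ Dpast I := by
  rintro ⟨y, z⟩ hyz
  have hpast : chronPast I y ⊆ chronPast I z := fun x hxy => hR x y z hxy hyz
  exact closure_mono hpast (hselfP y)

theorem dpast_largest_general {M : Type*} [TopologicalSpace M] (I : Set (M × M))
    (hIopen : IsOpen I)
    (hItrans : ∀ x y z : M, (x, y) ∈ I → (y, z) ∈ I → (x, z) ∈ I)
    (hselfP : ∀ x : M, x ∈ closure (chronPast I x)) :
    (∀ x y z : M, (x, y) ∈ I → (y, z) ∈ Dpast I → (x, z) ∈ I) ∧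
    (∀ R : Set (M × M),
      (∀ x y z : M, (x, y) ∈ I → (y, z) ∈ R → (x, z) ∈ I) → R ⊆ Dpast I) :=
  ⟨fun _ _ _ hxy hyz => mem_of_mem_of_mem_Dpast hIopen hItrans hxy hyz,
    fun _ hR => subset_Dpast_of_comp_subset hselfP hR⟩

/-- `D⁺_p` is the largest relation `R` with
`(x,y) ∈ I` and `(y,z) ∈ R` implying `(x,z) ∈ I`. -/
theorem dpast_largest {M : Type*} [TopologicalSpace M] (I : Set (M × M))
    (hIopen : IsOpen I)
    (hItrans : ∀ x y z : M, (x, y) ∈ I → (y, z) ∈ I → (x, z) ∈ I)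
    (hselfF : ∀ x : M, x ∈ closure (chronFuture I x))
    (hselfP : ∀ x : M, x ∈ closure (chronPast I x)) :
    (∀ x y z : M, (x, y) ∈ I → (y, z) ∈ Dpast I → (x, z) ∈ I) ∧
    (∀ R : Set (M × M),
      (∀ x y z : M, (x, y) ∈ I → (y, z) ∈ R → (x, z) ∈ I) → R ⊆ Dpast I) :=
  dpast_largest_general I hIopen hItrans hselfP
end

section
/- D⁺_f is the largest relation R ⊆ M × M with the property that (x,y) ∈ R and (y,z) ∈ I imply (x,z) ∈ I; that is, any relation R with this property satisfies R ⊆ D⁺_f, and D⁺_f itself has the property. -/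
open Set Topology

theorem isOpen_chronPast {M : Type*} [TopologicalSpace M] {I : Set (M × M)} (hI : IsOpen I)
    (z : M) : IsOpen (chronPast I z) :=
  hI.preimage (continuous_id.prodMk continuous_const)

theorem mem_of_mem_Dfut_of_mem {M : Type*} [TopologicalSpace M] {I : Set (M × M)}
    (hIopen : IsOpen I) (hItrans : ∀ x y z : M, (x, y) ∈ I → (y, z) ∈ I → (x, z) ∈ I)
    {x y z : M} (hxy : (x, y) ∈ Dfut I) (hyz : (y, z) ∈ I) : (x, z) ∈ I := by
  -- `I⁻(z)` is an open neighbourhood of `y`, so it meets `I⁺(x)`.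
  obtain ⟨w, hwz, hxw⟩ := mem_closure_iff.mp hxy _ (isOpen_chronPast hIopen z) hyz
  exact hItrans x w z hxw hwz

theorem mem_Dfut_of_chronFuture_subset {M : Type*} [TopologicalSpace M] {I : Set (M × M)}
    {x y : M} (hy : y ∈ closure (chronFuture I y)) (hsub : chronFuture I y ⊆ chronFuture I x) :
    (x, y) ∈ Dfut I :=
  closure_mono hsub hy

theorem dfut_largest_general {M : Type*} [TopologicalSpace M] (I : Set (M × M))
    (hIopen : IsOpen I)
    (hItrans : ∀ x y z : M, (x, y) ∈ I → (y, z) ∈ I → (x, z) ∈ I)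
    (hselfF : ∀ x : M, x ∈ closure (chronFuture I x)) :
    (∀ x y z : M, (x, y) ∈ Dfut I → (y, z) ∈ I → (x, z) ∈ I) ∧
    (∀ R : Set (M × M),
      (∀ x y z : M, (x, y) ∈ R → (y, z) ∈ I → (x, z) ∈ I) → R ⊆ Dfut I) :=
  ⟨fun _ _ _ => mem_of_mem_Dfut_of_mem hIopen hItrans,
    fun _ hR p hp => mem_Dfut_of_chronFuture_subset (hselfF p.2) fun _ => hR p.1 p.2 _ hp⟩

/-- `D⁺_f` is the largest relation `R` with
`(x,y) ∈ R` and `(y,z) ∈ I` implying `(x,z) ∈ I`. -/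
theorem dfut_largest {M : Type*} [TopologicalSpace M] (I : Set (M × M))
    (hIopen : IsOpen I)
    (hItrans : ∀ x y z : M, (x, y) ∈ I → (y, z) ∈ I → (x, z) ∈ I)
    (hselfF : ∀ x : M, x ∈ closure (chronFuture I x))
    (hselfP : ∀ x : M, x ∈ closure (chronPast I x)) :
    (∀ x y z : M, (x, y) ∈ Dfut I → (y, z) ∈ I → (x, z) ∈ I) ∧
    (∀ R : Set (M × M),
      (∀ x y z : M, (x, y) ∈ R → (y, z) ∈ I → (x, z) ∈ I) → R ⊆ Dfut I) :=
  dfut_largest_general I hIopen hItrans hselfF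
end

section
/- If the space is feebly distinguishing, then it is causal; that is, if for all x, y ∈ M, (x,y) ∈ J and (y,x) ∈ D⁺ imply x = y, then J is antisymmetric. -/
open Set Topology

section PushUp

variable {M : Type*} {I J : Set (M × M)} {x y : M}

theorem chronFuture_subset_of_mem
    (hPushDown : ∀ x y z : M, (x, y) ∈ J → (y, z) ∈ I → (x, z) ∈ I) (hxy : (x, y) ∈ J) :
    chronFuture I y ⊆ chronFuture I x :=
  fun _ hz => hPushDown x y _ hxy hz

theorem chronPast_subset_of_mem
    (hPushUp : ∀ x y z : M, (x, y) ∈ I → (y, z) ∈ J → (x, z) ∈ I) (hxy : (x, y) ∈ J) :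
    chronPast I x ⊆ chronPast I y :=
  fun _ hz => hPushUp _ x y hz hxy

theorem mem_Dplus_of_mem [TopologicalSpace M]
    (hselfF : ∀ x : M, x ∈ closure (chronFuture I x))
    (hselfP : ∀ x : M, x ∈ closure (chronPast I x))
    (hPushUp : ∀ x y z : M, (x, y) ∈ I → (y, z) ∈ J → (x, z) ∈ I)
    (hPushDown : ∀ x y z : M, (x, y) ∈ J → (y, z) ∈ I → (x, z) ∈ I) (hxy : (x, y) ∈ J) :
    (x, y) ∈ Dplus I :=
  ⟨closure_mono (chronFuture_subset_of_mem hPushDown hxy) (hselfF y),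
    closure_mono (chronPast_subset_of_mem hPushUp hxy) (hselfP x)⟩

end PushUp

theorem causal_of_feebly_dist_general {M : Type*} [TopologicalSpace M] (I J : Set (M × M))
    (hselfF : ∀ x : M, x ∈ closure (chronFuture I x))
    (hselfP : ∀ x : M, x ∈ closure (chronPast I x))
    (hPushUp : ∀ x y z : M, (x, y) ∈ I → (y, z) ∈ J → (x, z) ∈ I)
    (hPushDown : ∀ x y z : M, (x, y) ∈ J → (y, z) ∈ I → (x, z) ∈ I)
    (hFeeble : ∀ x y : M, (x, y) ∈ J → (y, x) ∈ Dplus I → x = y) :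
    ∀ x y : M, (x, y) ∈ J → (y, x) ∈ J → x = y :=
  fun x y hxy hyx => hFeeble x y hxy (mem_Dplus_of_mem hselfF hselfP hPushUp hPushDown hyx)

/-- feeble distinction implies causality (`J` antisymmetric). -/
theorem causal_of_feebly_dist {M : Type*} [TopologicalSpace M] (I J : Set (M × M))
    (hIopen : IsOpen I)
    (hItrans : ∀ x y z : M, (x, y) ∈ I → (y, z) ∈ I → (x, z) ∈ I)
    (hselfF : ∀ x : M, x ∈ closure (chronFuture I x))
    (hselfP : ∀ x : M, x ∈ closure (chronPast I x))
    (hJrefl : ∀ x : M, (x, x) ∈ J)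
    (hJtrans : ∀ x y z : M, (x, y) ∈ J → (y, z) ∈ J → (x, z) ∈ J)
    (hIJ : I ⊆ J)
    (hPushUp : ∀ x y z : M, (x, y) ∈ I → (y, z) ∈ J → (x, z) ∈ I)
    (hPushDown : ∀ x y z : M, (x, y) ∈ J → (y, z) ∈ I → (x, z) ∈ I)
    (hFeeble : ∀ x y : M, (x, y) ∈ J → (y, x) ∈ Dplus I → x = y) :
    ∀ x y : M, (x, y) ∈ J → (y, x) ∈ J → x = y :=
  causal_of_feebly_dist_general I J hselfF hselfP hPushUp hPushDown hFeeble
end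

section
/- If the space is feebly distinguishing and reflecting (D⁺_f = A⁺ and D⁺_p = A⁺), then distinct causally related points have distinct chronological futures and distinct chronological pasts: for all x, y ∈ M with (x,y) ∈ J, if I⁺(x) = I⁺(y) then x = y, and if I⁻(x) = I⁻(y) then x = y. (In a spacetime this yields full distinction and hence causal continuity; this is the abstract content of the paper's Corollary 1.) -/
open Set Topology

/-- `A⁺ = cl(J)`, the closure of the causal relation in `M × M`. -/
def Aplus {M : Type*} [TopologicalSpace M] (J : Set (M × M)) : Set (M × M) :=
  closure J

/-! If `I⁺(x) = I⁺(y)`, then `x ∈ cl I⁺(x) = cl I⁺(y)`, i.e. `(y, x) ∈ D⁺_f`; dually for pasts.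
Reflectivity gives `D⁺_f = A⁺ = D⁺_p`, so `D⁺_f = D⁺_p = D⁺`, and feeble distinction applied to
`(x, y) ∈ J` forces `x = y`. -/

section Reflecting

variable {M : Type*} [TopologicalSpace M] {I : Set (M × M)}

theorem mem_Dfut_of_chronFuture_eq {x y : M} (hx : x ∈ closure (chronFuture I x))
    (h : chronFuture I x = chronFuture I y) : (y, x) ∈ Dfut I :=
  show x ∈ closure (chronFuture I y) from h ▸ hx

theorem mem_Dpast_of_chronPast_eq {x y : M} (hy : y ∈ closure (chronPast I y))
    (h : chronPast I x = chronPast I y) : (y, x) ∈ Dpast I :=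
  show y ∈ closure (chronPast I x) from h ▸ hy

theorem Dplus_eq_Dfut (h : Dfut I = Dpast I) : Dplus I = Dfut I := by
  rw [Dplus, ← h, inter_self]

theorem Dplus_eq_Dpast (h : Dfut I = Dpast I) : Dplus I = Dpast I := by
  rw [Dplus, h, inter_self]

end Reflecting

theorem causally_continuous_of_feeble_reflecting_general {M : Type*} [TopologicalSpace M]
    (I J : Set (M × M))
    (hselfF : ∀ x : M, x ∈ closure (chronFuture I x))
    (hselfP : ∀ x : M, x ∈ closure (chronPast I x))
    (hFeeble : ∀ x y : M, (x, y) ∈ J → (y, x) ∈ Dplus I → x = y)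
    (hFR : Dfut I = Aplus J) (hPR : Dpast I = Aplus J) :
    ∀ x y : M, (x, y) ∈ J →
      ((chronFuture I x = chronFuture I y → x = y) ∧
       (chronPast I x = chronPast I y → x = y)) := by
  have hDf : Dfut I = Dpast I := hFR.trans hPR.symm
  intro x y hxy
  refine ⟨fun hF => hFeeble x y hxy ?_, fun hP => hFeeble x y hxy ?_⟩
  · rw [Dplus_eq_Dfut hDf]
    exact mem_Dfut_of_chronFuture_eq (hselfF x) hF
  · rw [Dplus_eq_Dpast hDf]
    exact mem_Dpast_of_chronPast_eq (hselfP y) hP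

/-- feeble distinction plus reflectivity gives full distinction
along causally related pairs (abstract form of causal continuity). -/
theorem causally_continuous_of_feeble_reflecting {M : Type*} [TopologicalSpace M]
    (I J : Set (M × M))
    (hIopen : IsOpen I)
    (hItrans : ∀ x y z : M, (x, y) ∈ I → (y, z) ∈ I → (x, z) ∈ I)
    (hselfF : ∀ x : M, x ∈ closure (chronFuture I x))
    (hselfP : ∀ x : M, x ∈ closure (chronPast I x))
    (hJrefl : ∀ x : M, (x, x) ∈ J)
    (hJtrans : ∀ x y z : M, (x, y) ∈ J → (y, z) ∈ J → (x, z) ∈ J)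
    (hIJ : I ⊆ J)
    (hPushUp : ∀ x y z : M, (x, y) ∈ I → (y, z) ∈ J → (x, z) ∈ I)
    (hPushDown : ∀ x y z : M, (x, y) ∈ J → (y, z) ∈ I → (x, z) ∈ I)
    (hFeeble : ∀ x y : M, (x, y) ∈ J → (y, x) ∈ Dplus I → x = y)
    (hFR : Dfut I = Aplus J) (hPR : Dpast I = Aplus J) :
    ∀ x y : M, (x, y) ∈ J →
      ((chronFuture I x = chronFuture I y → x = y) ∧
       (chronPast I x = chronPast I y → x = y)) :=
  causally_continuous_of_feeble_reflecting_general I J hselfF hselfP hFeeble hFR hPR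
end
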